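/- Let α, β be irrational with α ± β ∉ ℤ, convergent denominators q_n (of α) and t_m (of β), partial quotients a_n of α, and suppose q_{n−1} ≤ t_{m−1} < q_n < t_m. Let C = √5(1 − √((√5−1)/2)) and define d(t) = 1/ψ_β(t) − 1/ψ_α(t). If |d(t)| < C t for all t ≥ t_{m−1}, then a_{n+1} = 1. -/

import Mathlib

/-- Distance from a real number to the nearest integer. -/
noncomputable def dnint (x : ℝ) : ℝ := |x - round x|

/-- The irrationality measure function `ψ_ξ(t) = min_{1 ≤ q ≤ t, q ∈ ℤ} ‖qξ‖`. -/
noncomputable def psi (ξ t : ℝ) : ℝ :=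
  sInf {v : ℝ | ∃ q : ℤ, 1 ≤ q ∧ (q : ℝ) ≤ t ∧ v = dnint ((q : ℝ) * ξ)}

/-!
With `D_k = q_k α_{k+1} + q_{k-1}` one has `‖q_k α‖ = 1 / D_k`, and by the best approximation
property of convergents `ψ_α = 1 / D_k` on `[q_k, q_{k+1})`. Hence, when
`t_m ≤ q_{n+1} < t_{m+1}`, the function `1 / ψ_β` takes the same value at `t_m` and at
`q_{n+1}`, so `d(t_m) - d(q_{n+1}) = D_{n+1} - D_n > q_{n+1} (a_{n+2} - 1)`.
The hypothesis bounds the left side by `C (t_m + q_{n+1}) ≤ 2 C q_{n+1} < q_{n+1}`, which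
forces `a_{n+2} < 2`.
-/

/-- `x r` is the `r`-th complete quotient of the irrational number `x 0`
and `a r` its `r`-th partial quotient. -/
structure IsContFracExpansion (x : ℕ → ℝ) (a : ℕ → ℤ) : Prop where
  irrational : Irrational (x 0)
  succ_eq : ∀ r, x (r + 1) = (x r - ⌊x r⌋)⁻¹
  eq_floor : ∀ r, a r = ⌊x r⌋

/-! The convergents are indexed with a shift: `convNum a (k + 1) / convDen a (k + 1) = p_k / q_k`,
and `convDen a 0 = q_{-1} = 0`. -/

def convNum (a : ℕ → ℤ) : ℕ → ℤ
  | 0 => 1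
  | 1 => a 0
  | k + 2 => a (k + 1) * convNum a (k + 1) + convNum a k

def convDen (a : ℕ → ℤ) : ℕ → ℤ
  | 0 => 0
  | 1 => 1
  | k + 2 => a (k + 1) * convDen a (k + 1) + convDen a k

section Convergents

variable {a : ℕ → ℤ}

theorem convNum_mul_convDen_sub (k : ℕ) :
    convNum a (k + 1) * convDen a k - convNum a k * convDen a (k + 1) = (-1) ^ (k + 1) := by
  induction k with
  | zero => simp [convNum, convDen]
  | succ k ih =>
    simp only [convNum, convDen]
    linear_combination (-1 : ℤ) * ih

theorem convDen_succ_eq {q : ℕ → ℤ} (h0 : q 0 = 1) (h1 : q 1 = a 1)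
    (hrec : ∀ k, q (k + 2) = a (k + 2) * q (k + 1) + q k) (k : ℕ) :
    convDen a (k + 1) = q k := by
  induction k using Nat.twoStepInduction with
  | zero => simp [convDen, h0]
  | one => simp [convDen, h1]
  | more k ih1 ih2 =>
    rw [hrec, ← ih1, ← ih2]
    rfl

theorem one_le_convDen_succ (ha : ∀ r, 1 ≤ a (r + 1)) (k : ℕ) : 1 ≤ convDen a (k + 1) := by
  induction k using Nat.twoStepInduction with
  | zero => simp [convDen]
  | one => simpa [convDen] using ha 0
  | more k ih1 ih2 =>
    show 1 ≤ a (k + 2) * convDen a (k + 2) + convDen a (k + 1)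
    nlinarith [ha (k + 1)]

theorem convDen_nonneg (ha : ∀ r, 1 ≤ a (r + 1)) (k : ℕ) : 0 ≤ convDen a k := by
  cases k with
  | zero => simp [convDen]
  | succ k => linarith [one_le_convDen_succ ha k]

theorem convDen_lt_convDen_succ (ha : ∀ r, 1 ≤ a (r + 1)) (k : ℕ) :
    convDen a (k + 2) < convDen a (k + 3) := by
  show convDen a (k + 2) < a (k + 2) * convDen a (k + 2) + convDen a (k + 1)
  nlinarith [ha (k + 1), one_le_convDen_succ ha k, one_le_convDen_succ ha (k + 1)]

end Convergents

/-- `err x a k = q_k ξ - p_k` for `ξ = x 0`. -/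
noncomputable def err (x : ℕ → ℝ) (a : ℕ → ℤ) (k : ℕ) : ℝ :=
  convDen a (k + 1) * x 0 - convNum a (k + 1)

/-- `invErr x a k = q_k ξ_{k+1} + q_{k-1}`. -/
noncomputable def invErr (x : ℕ → ℝ) (a : ℕ → ℤ) (k : ℕ) : ℝ :=
  x (k + 1) * convDen a (k + 1) + convDen a k

theorem Int.ne_zero_and_mul_nonpos_of_lt {b b' u v : ℤ} (hb : 0 ≤ b) (hb' : 1 ≤ b')
    (h1 : 1 ≤ u * b + v * b') (h2 : u * b + v * b' < b') : u ≠ 0 ∧ u * v ≤ 0 := by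
  constructor
  · rintro rfl
    rcases le_or_gt v 0 with hv | hv <;> nlinarith
  · rcases le_or_gt u 0 with hu | hu <;> rcases le_or_gt v 0 with hv | hv <;> nlinarith

theorem abs_le_abs_add_of_mul_nonneg {u v : ℝ} (h : 0 ≤ u * v) : |u| ≤ |u + v| := by
  have hsum : |u + v| = |u| + |v| := by
    rcases mul_nonneg_iff.mp h with h | h
    · exact (abs_add_eq_add_abs_iff u v).mpr (Or.inl h)
    · exact (abs_add_eq_add_abs_iff u v).mpr (Or.inr h)
  rw [hsum]
  exact le_add_of_nonneg_right (abs_nonneg v)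

theorem psi_le_dnint (ξ : ℝ) {t : ℝ} {c : ℤ} (h1 : 1 ≤ c) (h2 : (c : ℝ) ≤ t) :
    psi ξ t ≤ dnint (c * ξ) :=
  csInf_le ⟨0, by rintro v ⟨q, _, _, rfl⟩; exact abs_nonneg _⟩ ⟨c, h1, h2, rfl⟩

theorem le_psi (ξ : ℝ) {t v : ℝ} (ht : 1 ≤ t)
    (h : ∀ c : ℤ, 1 ≤ c → (c : ℝ) ≤ t → v ≤ dnint (c * ξ)) : v ≤ psi ξ t :=
  le_csInf ⟨_, 1, le_rfl, by exact_mod_cast ht, rfl⟩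
    (by rintro _ ⟨c, hc1, hc2, rfl⟩; exact h c hc1 hc2)

namespace IsContFracExpansion

variable {x : ℕ → ℝ} {a : ℕ → ℤ}

theorem irrational_apply (h : IsContFracExpansion x a) (r : ℕ) : Irrational (x r) := by
  induction r with
  | zero => exact h.irrational
  | succ r ih => rw [h.succ_eq]; exact (ih.sub_intCast _).inv

theorem fract_pos (h : IsContFracExpansion x a) (r : ℕ) : 0 < x r - a r := by
  rw [h.eq_floor]
  exact Int.fract_pos.mpr ((h.irrational_apply r).ne_int _)

theorem sub_mul_succ (h : IsContFracExpansion x a) (r : ℕ) : (x r - a r) * x (r + 1) = 1 := by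
  rw [h.succ_eq, ← h.eq_floor]
  exact mul_inv_cancel₀ (h.fract_pos r).ne'

theorem one_lt_succ (h : IsContFracExpansion x a) (r : ℕ) : 1 < x (r + 1) := by
  rw [h.succ_eq]
  exact one_lt_inv₀ (by simpa [h.eq_floor] using h.fract_pos r) |>.mpr (Int.fract_lt_one _)

theorem floor_le (h : IsContFracExpansion x a) (r : ℕ) : (a r : ℝ) ≤ x r := by
  rw [h.eq_floor]
  exact Int.floor_le _

theorem one_le_succ (h : IsContFracExpansion x a) (r : ℕ) : 1 ≤ a (r + 1) := by
  rw [h.eq_floor]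
  exact Int.le_floor.mpr (by exact_mod_cast (h.one_lt_succ r).le)

theorem mul_invErr (h : IsContFracExpansion x a) (k : ℕ) :
    x 0 * invErr x a k = x (k + 1) * convNum a (k + 1) + convNum a k := by
  unfold invErr
  induction k with
  | zero =>
    simp only [convNum, convDen]
    linear_combination h.sub_mul_succ 0
  | succ k ih =>
    simp only [convNum, convDen]
    push_cast
    linear_combination x (k + 2) * ih
      + ((convNum a (k + 1) : ℝ) - x 0 * convDen a (k + 1)) * h.sub_mul_succ (k + 1)

theorem err_mul_invErr (h : IsContFracExpansion x a) (k : ℕ) :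
    err x a k * invErr x a k = (-1) ^ k := by
  have hdet : ((convNum a (k + 1) * convDen a k - convNum a k * convDen a (k + 1) : ℤ) : ℝ)
      = (-1) ^ (k + 1) := by exact_mod_cast convNum_mul_convDen_sub k
  push_cast at hdet
  have hmul := h.mul_invErr k
  unfold invErr at hmul ⊢
  unfold err
  linear_combination (convDen a (k + 1) : ℝ) * hmul - hdet

theorem invErr_pos (h : IsContFracExpansion x a) (k : ℕ) : 0 < invErr x a k := by
  have hq : (1 : ℝ) ≤ convDen a (k + 1) := by exact_mod_cast one_le_convDen_succ h.one_le_succ k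
  have hq' : (0 : ℝ) ≤ convDen a k := by exact_mod_cast convDen_nonneg h.one_le_succ k
  unfold invErr
  nlinarith [h.one_lt_succ k]

theorem abs_err (h : IsContFracExpansion x a) (k : ℕ) : |err x a k| = (invErr x a k)⁻¹ := by
  have habs := congrArg abs (h.err_mul_invErr k)
  rw [abs_mul, abs_of_pos (h.invErr_pos k), abs_pow, abs_neg, abs_one, one_pow] at habs
  exact eq_inv_of_mul_eq_one_left habs

theorem err_mul_err_succ_neg (h : IsContFracExpansion x a) (k : ℕ) :
    err x a k * err x a (k + 1) < 0 := by
  have hprod : (err x a k * invErr x a k) * (err x a (k + 1) * invErr x a (k + 1)) = -1 := by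
    rw [h.err_mul_invErr, h.err_mul_invErr, ← pow_add, Odd.neg_one_pow ⟨k, by ring⟩]
  nlinarith [mul_pos (h.invErr_pos k) (h.invErr_pos (k + 1))]

/-- Lagrange's best approximation property of the convergents. -/
theorem abs_err_le (h : IsContFracExpansion x a) (k : ℕ) {c : ℤ} (p : ℤ) (hc1 : 1 ≤ c)
    (hc2 : c < convDen a (k + 2)) : |err x a k| ≤ |c * x 0 - p| := by
  have hε : ((-1) ^ k * (-1) ^ k : ℤ) = 1 := by rw [← pow_add, Even.neg_one_pow ⟨k, rfl⟩]
  have hdet : convNum a (k + 2) * convDen a (k + 1) - convNum a (k + 1) * convDen a (k + 2)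
      = (-1) ^ k := by
    linear_combination convNum_mul_convDen_sub (a := a) (k + 1)
  -- coordinates of `(c, p)` in the unimodular basis `(q_k, p_k), (q_{k+1}, p_{k+1})`
  obtain ⟨u, v, hc, hp⟩ : ∃ u v : ℤ, u * convDen a (k + 1) + v * convDen a (k + 2) = c ∧
      u * convNum a (k + 1) + v * convNum a (k + 2) = p :=
    ⟨(-1) ^ k * (c * convNum a (k + 2) - p * convDen a (k + 2)),
      (-1) ^ k * (p * convDen a (k + 1) - c * convNum a (k + 1)),
      by linear_combination ((-1) ^ k * c) * hdet + c * hε,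
      by linear_combination ((-1) ^ k * p) * hdet + p * hε⟩
  have hcR : (u * convDen a (k + 1) + v * convDen a (k + 2) : ℝ) = c := by exact_mod_cast hc
  have hpR : (u * convNum a (k + 1) + v * convNum a (k + 2) : ℝ) = p := by exact_mod_cast hp
  have hsplit : (c : ℝ) * x 0 - p = u * err x a k + v * err x a (k + 1) := by
    unfold err
    linear_combination hpR - x 0 * hcR
  obtain ⟨hu, huv⟩ := Int.ne_zero_and_mul_nonpos_of_lt (convDen_nonneg h.one_le_succ (k + 1))
    (one_le_convDen_succ h.one_le_succ (k + 1)) (hc ▸ hc1) (hc ▸ hc2)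
  have hu1 : (1 : ℝ) ≤ |(u : ℝ)| := by exact_mod_cast Int.one_le_abs hu
  have huvR : (u : ℝ) * v ≤ 0 := by exact_mod_cast huv
  have hsame : 0 ≤ (u * err x a k) * (v * err x a (k + 1)) := by
    nlinarith [h.err_mul_err_succ_neg k]
  calc |err x a k| ≤ |(u : ℝ)| * |err x a k| := le_mul_of_one_le_left (abs_nonneg _) hu1
    _ = |u * err x a k| := (abs_mul _ _).symm
    _ ≤ |c * x 0 - p| := hsplit ▸ abs_le_abs_add_of_mul_nonneg hsame

theorem one_div_psi_eq (h : IsContFracExpansion x a) (k : ℕ) {T : ℝ}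
    (hT1 : (convDen a (k + 1) : ℝ) ≤ T) (hT2 : T < convDen a (k + 2)) :
    1 / psi (x 0) T = invErr x a k := by
  have hq : 1 ≤ convDen a (k + 1) := one_le_convDen_succ h.one_le_succ k
  have hle : psi (x 0) T ≤ (invErr x a k)⁻¹ := by
    rw [← h.abs_err]
    exact (psi_le_dnint _ hq hT1).trans (round_le _ _)
  have hge : (invErr x a k)⁻¹ ≤ psi (x 0) T := by
    refine le_psi _ (le_trans (by exact_mod_cast hq) hT1) fun c hc1 hc2 => ?_
    rw [← h.abs_err]
    exact h.abs_err_le k _ hc1 (by exact_mod_cast hc2.trans_lt hT2)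
  rw [le_antisymm hle hge, one_div, inv_inv]

theorem convDen_mul_lt_invErr_succ_sub (h : IsContFracExpansion x a) (k : ℕ) :
    convDen a (k + 2) * (a (k + 2) - 1 : ℝ) < invErr x a (k + 1) - invErr x a k := by
  have hq : (1 : ℝ) ≤ convDen a (k + 1) := by exact_mod_cast one_le_convDen_succ h.one_le_succ k
  have hq' : (1 : ℝ) ≤ convDen a (k + 2) := by
    exact_mod_cast one_le_convDen_succ h.one_le_succ (k + 1)
  have hrec : (convDen a (k + 2) : ℝ) = a (k + 1) * convDen a (k + 1) + convDen a k := by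
    simp [convDen]
  -- `ξ_{k+1} - a_{k+1} = 1 / ξ_{k+2} < 1`
  have hfrac : x (k + 1) - a (k + 1) < 1 := by
    nlinarith [h.sub_mul_succ (k + 1), h.one_lt_succ (k + 1), h.fract_pos (k + 1)]
  unfold invErr
  nlinarith [mul_lt_mul_of_pos_right hfrac (by linarith : (0 : ℝ) < convDen a (k + 1)),
    mul_le_mul_of_nonneg_right (h.floor_le (k + 2)) (by linarith : (0 : ℝ) ≤ convDen a (k + 2))]

end IsContFracExpansion

theorem sqrt_five_mul_one_sub_sqrt_mem_Ico :
    √5 * (1 - √((√5 - 1) / 2)) ∈ Set.Ico 0 (1 / 2) := by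
  have h5 : √5 ^ 2 = 5 := Real.sq_sqrt (by norm_num)
  have h5lo : 2.236 < √5 := by nlinarith [Real.sqrt_nonneg 5]
  have h5hi : √5 < 2.2361 := by nlinarith [Real.sqrt_nonneg 5]
  have hs : √((√5 - 1) / 2) ^ 2 = (√5 - 1) / 2 := Real.sq_sqrt (by linarith)
  have hslo : 0.786 < √((√5 - 1) / 2) := by nlinarith [Real.sqrt_nonneg ((√5 - 1) / 2)]
  have hshi : √((√5 - 1) / 2) < 1 := by nlinarith [Real.sqrt_nonneg ((√5 - 1) / 2)]
  constructor <;> nlinarith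

-- The paper's indices `n, m` are `n + 1, m + 1` here.
theorem stmt_9_general (α β : ℝ) (hα : Irrational α) (hβ : Irrational β)
    (tlα : ℕ → ℝ) (aα : ℕ → ℤ) (q : ℕ → ℤ)
    (htlα0 : tlα 0 = α)
    (htlα : ∀ r, tlα (r + 1) = (tlα r - (⌊tlα r⌋ : ℝ))⁻¹)
    (haα : ∀ r, aα r = ⌊tlα r⌋)
    (hq0 : q 0 = 1) (hq1 : q 1 = aα 1)
    (hqrec : ∀ k, q (k + 2) = aα (k + 2) * q (k + 1) + q k)
    (tlβ : ℕ → ℝ) (aβ : ℕ → ℤ) (t : ℕ → ℤ)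
    (htlβ0 : tlβ 0 = β)
    (htlβ : ∀ r, tlβ (r + 1) = (tlβ r - (⌊tlβ r⌋ : ℝ))⁻¹)
    (haβ : ∀ r, aβ r = ⌊tlβ r⌋)
    (ht0 : t 0 = 1) (ht1 : t 1 = aβ 1)
    (htrec : ∀ k, t (k + 2) = aβ (k + 2) * t (k + 1) + t k)
    (n m : ℕ)
    (h1 : q n ≤ t m) (h2 : t m < q (n + 1)) (h3 : q (n + 1) < t (m + 1))
    (hd : ∀ x : ℝ, (t m : ℝ) ≤ x →
      |1 / psi β x - 1 / psi α x| <
        Real.sqrt 5 * (1 - Real.sqrt ((Real.sqrt 5 - 1) / 2)) * x) :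
    aα (n + 2) = 1 := by
  subst htlα0 htlβ0
  have hA : IsContFracExpansion tlα aα := ⟨hα, htlα, haα⟩
  have hB : IsContFracExpansion tlβ aβ := ⟨hβ, htlβ, haβ⟩
  obtain rfl : q = fun k => convDen aα (k + 1) :=
    funext fun k => (convDen_succ_eq hq0 hq1 hqrec k).symm
  obtain rfl : t = fun k => convDen aβ (k + 1) :=
    funext fun k => (convDen_succ_eq ht0 ht1 htrec k).symm
  beta_reduce at h1 h2 h3 hd
  have h1R : (convDen aα (n + 1) : ℝ) ≤ convDen aβ (m + 1) := by exact_mod_cast h1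
  have h2R : (convDen aβ (m + 1) : ℝ) < convDen aα (n + 2) := by exact_mod_cast h2
  have h3R : (convDen aα (n + 2) : ℝ) < convDen aβ (m + 2) := by exact_mod_cast h3
  have hd_tm := hd _ le_rfl
  have hd_q := hd _ h2R.le
  rw [hA.one_div_psi_eq n h1R h2R, hB.one_div_psi_eq m le_rfl (h2R.trans h3R)] at hd_tm
  rw [hA.one_div_psi_eq (n + 1) le_rfl (by exact_mod_cast convDen_lt_convDen_succ hA.one_le_succ n),
    hB.one_div_psi_eq m h2R.le h3R] at hd_q
  obtain ⟨hC0, hC1⟩ := sqrt_five_mul_one_sub_sqrt_mem_Ico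
  have hgap : invErr tlα aα (n + 1) - invErr tlα aα n < convDen aα (n + 2) := by
    nlinarith [abs_lt.mp hd_tm, abs_lt.mp hd_q, mul_le_mul_of_nonneg_left h2R.le hC0]
  have hq : (0 : ℝ) < convDen aα (n + 2) := by
    exact_mod_cast one_le_convDen_succ hA.one_le_succ (n + 1)
  have hlt : (aα (n + 2) : ℝ) < 2 := by
    nlinarith [hA.convDen_mul_lt_invErr_succ_sub n]
  have hlt' : aα (n + 2) < 2 := by exact_mod_cast hlt
  linarith [hA.one_le_succ (n + 1)]

/-- Lemma 4 (first part): if `q_{n-1} ≤ t_{m-1} < q_n < t_m` and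
`|d(x)| < C x` for all `x ≥ t_{m-1}`, where `d(x) = 1/ψ_β(x) - 1/ψ_α(x)` and
`C = √5 (1 - √((√5-1)/2))`, then `a_{n+1} = 1`
(stated with `n, m` replaced by `n + 1, m + 1`). -/
theorem stmt_9 (α β : ℝ) (hα : Irrational α) (hβ : Irrational β)
    (hsum : ∀ k : ℤ, α + β ≠ (k : ℝ)) (hdiff : ∀ k : ℤ, α - β ≠ (k : ℝ))
    (tlα : ℕ → ℝ) (aα : ℕ → ℤ) (q : ℕ → ℤ)
    (htlα0 : tlα 0 = α)
    (htlα : ∀ r, tlα (r + 1) = (tlα r - (⌊tlα r⌋ : ℝ))⁻¹)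
    (haα : ∀ r, aα r = ⌊tlα r⌋)
    (hq0 : q 0 = 1) (hq1 : q 1 = aα 1)
    (hqrec : ∀ k, q (k + 2) = aα (k + 2) * q (k + 1) + q k)
    (tlβ : ℕ → ℝ) (aβ : ℕ → ℤ) (t : ℕ → ℤ)
    (htlβ0 : tlβ 0 = β)
    (htlβ : ∀ r, tlβ (r + 1) = (tlβ r - (⌊tlβ r⌋ : ℝ))⁻¹)
    (haβ : ∀ r, aβ r = ⌊tlβ r⌋)
    (ht0 : t 0 = 1) (ht1 : t 1 = aβ 1)
    (htrec : ∀ k, t (k + 2) = aβ (k + 2) * t (k + 1) + t k)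
    (n m : ℕ)
    (h1 : q n ≤ t m) (h2 : t m < q (n + 1)) (h3 : q (n + 1) < t (m + 1))
    (hd : ∀ x : ℝ, (t m : ℝ) ≤ x →
      |1 / psi β x - 1 / psi α x| <
        Real.sqrt 5 * (1 - Real.sqrt ((Real.sqrt 5 - 1) / 2)) * x) :
    aα (n + 2) = 1 :=
  stmt_9_general α β hα hβ tlα aα q htlα0 htlα haα hq0 hq1 hqrec tlβ aβ t htlβ0 htlβ haβ ht0 ht1
    htrec n m h1 h2 h3 hd
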